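/- Let L* be a d-subspace of ℝ^D with d ≥ 1, and let the dataset X of N = N_in + N_out points consist of N_in inliers lying in L* and in general position in L*, together with N_out arbitrary outliers in ℝ^D, with inliers in general position and the well-definedness condition N_in > N_out + d − 1. Fix a step-size parameter and suppose additionally that cos(γ) · λ_d(X̃_in X̃_inᵀ) − N_out > 8 · (N_out + d − 1), where X̃_in is the matrix of unit-normalized inliers, λ_d denotes the d-th largest eigenvalue, and γ ∈ (0, π/2). Then for every d-subspace L with L ≠ L* and largest principal angle θ_1(L, L*) < γ, one has cos(γ) · λ_d(X̃_in X̃_inᵀ) − √(N_out) · ‖X̃_out‖₂ > 8 · (number of data points of X lying in L), where X̃_out is the matrix of unit-normalized outliers and ‖·‖₂ is the spectral norm. -/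

import Mathlib

open Module

/-- The points `a` are in *general position* in a `d`-dimensional subspace: every selection of
`d` of them at distinct indices is linearly independent. -/
def InGenPos {D N : ℕ} (a : Fin N → EuclideanSpace ℝ (Fin D)) (d : ℕ) : Prop :=
  ∀ s : Finset (Fin N), s.card = d →
    LinearIndependent ℝ (fun i : {x : Fin N // x ∈ s} => a i.1)

/-- Number of points of the family `x` lying in the subspace `L`. -/
noncomputable def countIn {D N : ℕ} (x : Fin N → EuclideanSpace ℝ (Fin D))
    (L : Submodule ℝ (EuclideanSpace ℝ (Fin D))) : ℕ :=
  Nat.card {i : Fin N // x i ∈ L}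

/-- The spectral (operator `ℓ² → ℓ²`) norm of a matrix. -/
noncomputable def specNorm {m n : ℕ} (A : Matrix (Fin m) (Fin n) ℝ) : ℝ :=
  ‖LinearMap.toContinuousLinearMap (Matrix.toEuclideanLin A)‖

/-- The orthogonal projection onto a subspace `L` of `ℝ^D`, as a map `ℝ^D → ℝ^D`. -/
noncomputable def projCLM {D : ℕ} (L : Submodule ℝ (EuclideanSpace ℝ (Fin D))) :
    EuclideanSpace ℝ (Fin D) →L[ℝ] EuclideanSpace ℝ (Fin D) :=
  L.subtypeL.comp (L.orthogonalProjectionOnto)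

/-!
By general position, `d` inliers lying in a `d`-subspace `L` would span both `L` and `L*`,
so `L ≠ L*` contains at most `d - 1` inliers and `|X ∩ L| ≤ N_out + d - 1`. The columns of `X̃_out` have norm at most one, so
`‖X̃_out‖₂ ≤ ‖X̃_out‖_F ≤ √N_out`, and the left-hand side is at least
`cos γ · λ_d − N_out > 8 (N_out + d − 1)`.
-/

lemma Matrix.opNorm_toEuclideanLin_le_of_sum_sq_le {m n : Type*} [Fintype m] [Fintype n]
    [DecidableEq n] (A : Matrix m n ℝ) {c : ℝ} (hc : 0 ≤ c) (h : ∑ i, ∑ j, A i j ^ 2 ≤ c ^ 2) :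
    ‖LinearMap.toContinuousLinearMap (Matrix.toEuclideanLin A)‖ ≤ c := by
  refine ContinuousLinearMap.opNorm_le_bound _ hc fun x => ?_
  have hsq : ‖Matrix.toEuclideanLin A x‖ ^ 2 ≤ (c * ‖x‖) ^ 2 := by
    rw [EuclideanSpace.real_norm_sq_eq, mul_pow, EuclideanSpace.real_norm_sq_eq]
    calc ∑ i, (∑ j, A i j * x j) ^ 2
        ≤ ∑ i, (∑ j, A i j ^ 2) * ∑ j, x j ^ 2 :=
          Finset.sum_le_sum fun i _ => Finset.sum_mul_sq_le_sq_mul_sq _ _ _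
      _ = (∑ i, ∑ j, A i j ^ 2) * ∑ j, x j ^ 2 := (Finset.sum_mul ..).symm
      _ ≤ c ^ 2 * ∑ j, x j ^ 2 := by gcongr
  exact (sq_le_sq₀ (norm_nonneg _) (by positivity)).mp hsq

lemma EuclideanSpace.sum_sq_div_norm_le_one {n : Type*} [Fintype n] (v : EuclideanSpace ℝ n) :
    ∑ i, (v i / ‖v‖) ^ 2 ≤ 1 := by
  simp only [div_pow, ← Finset.sum_div, ← EuclideanSpace.real_norm_sq_eq]
  exact div_self_le_one _

lemma specNorm_normalized_columns_le {D N : ℕ} (o : Fin N → EuclideanSpace ℝ (Fin D)) :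
    specNorm (Matrix.of fun i j => o j i / ‖o j‖) ≤ Real.sqrt N := by
  refine Matrix.opNorm_toEuclideanLin_le_of_sum_sq_le _ (Real.sqrt_nonneg _) ?_
  rw [Real.sq_sqrt N.cast_nonneg, Finset.sum_comm]
  simp only [Matrix.of_apply]
  calc ∑ j : Fin N, ∑ i : Fin D, (o j i / ‖o j‖) ^ 2
      ≤ ∑ _j : Fin N, (1 : ℝ) :=
        Finset.sum_le_sum fun j _ => EuclideanSpace.sum_sq_div_norm_le_one (o j)
    _ = N := by simp

lemma Submodule.eq_of_linearIndependent_mem {K V ι : Type*} [Field K] [AddCommGroup V]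
    [Module K V] [FiniteDimensional K V] [Fintype ι] {v : ι → V} (hv : LinearIndependent K v)
    {L L' : Submodule K V} (hL : ∀ i, v i ∈ L) (hL' : ∀ i, v i ∈ L')
    (hrank : finrank K L = Fintype.card ι) (hrank' : finrank K L' = Fintype.card ι) :
    L = L' := by
  have hspan : ∀ M : Submodule K V, (∀ i, v i ∈ M) → finrank K M = Fintype.card ι →
      span K (Set.range v) = M := fun M hM hMrank =>
    Submodule.eq_of_le_of_finrank_eq (Submodule.span_le.mpr (Set.range_subset_iff.mpr hM))
      (by rw [finrank_span_eq_card hv, hMrank])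
  rw [← hspan L hL hrank, hspan L' hL' hrank']

lemma countIn_lt_of_inGenPos {D N d : ℕ} {a : Fin N → EuclideanSpace ℝ (Fin D)}
    (hgp : InGenPos a d) {Lstar L : Submodule ℝ (EuclideanSpace ℝ (Fin D))}
    (haL : ∀ i, a i ∈ Lstar) (hLstar : finrank ℝ Lstar = d) (hL : finrank ℝ L = d)
    (hne : L ≠ Lstar) : countIn a L < d := by
  classical
  by_contra! hcount
  rw [countIn, Nat.card_eq_fintype_card, Fintype.card_subtype] at hcount
  obtain ⟨s, hsL, hs⟩ := Finset.exists_subset_card_eq hcount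
  refine hne (Submodule.eq_of_linearIndependent_mem (hgp s hs) (fun i => ?_) (fun i => haL i)
    (by simp [hL, hs]) (by simp [hLstar, hs]))
  simpa using hsL i.2

lemma countIn_le {D N : ℕ} (x : Fin N → EuclideanSpace ℝ (Fin D))
    (L : Submodule ℝ (EuclideanSpace ℝ (Fin D))) : countIn x L ≤ N := by
  simpa [countIn] using Finite.card_subtype_le (fun i => x i ∈ L)

/-- (Deterministic condition for linear convergence of SGGD.) With inliers
in general position in the `d`-subspace `L*`, arbitrary outliers, `N_in > N_out + d − 1`,
`γ ∈ (0, π/2)`, an antitone eigenvalue listing `μ` of `X̃_in X̃_inᵀ`, and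
`cos γ · λ_d(X̃_in X̃_inᵀ) − N_out > 8 (N_out + d − 1)`, every `d`-subspace `L ≠ L*` with
largest principal angle `θ_1(L, L*) < γ` (equivalently `‖P_L − P_{L*}‖₂ < sin γ`) satisfies
`cos γ · λ_d(X̃_in X̃_inᵀ) − √N_out · ‖X̃_out‖₂ > 8 · |X ∩ L|`. -/
theorem stmt_16 (D d Nin Nout : ℕ) (hd : 1 ≤ d) (hdD : d ≤ D)
    (Lstar : Submodule ℝ (EuclideanSpace ℝ (Fin D)))
    (hLstar : finrank ℝ Lstar = d)
    (a : Fin Nin → EuclideanSpace ℝ (Fin D)) (haL : ∀ i, a i ∈ Lstar)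
    (hgp : InGenPos a d)
    (o : Fin Nout → EuclideanSpace ℝ (Fin D))
    (γ : ℝ)
    -- the unit-normalized inliers and outliers
    (Xout : Matrix (Fin D) (Fin Nout) ℝ) (hXout : Xout = Matrix.of fun i j => o j i / ‖o j‖)
    -- an antitone listing `μ` of the eigenvalues of `X̃_in X̃_inᵀ`, so `λ_d = μ (d-1)`
    (μ : Fin D → ℝ)
    (hcond : 8 * ((Nout : ℝ) + d - 1) < Real.cos γ * μ ⟨d - 1, by omega⟩ - Nout) :
    ∀ L : Submodule ℝ (EuclideanSpace ℝ (Fin D)), finrank ℝ L = d → L ≠ Lstar →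
      ‖projCLM L - projCLM Lstar‖ < Real.sin γ →
      8 * ((countIn a L + countIn o L : ℕ) : ℝ) <
        Real.cos γ * μ ⟨d - 1, by omega⟩ - Real.sqrt Nout * specNorm Xout := by
  intro L hL hne _
  have hin := countIn_lt_of_inGenPos hgp haL hLstar hL hne
  have hout := countIn_le o L
  have hcount : ((countIn a L + countIn o L : ℕ) : ℝ) ≤ Nout + d - 1 := by
    have hin' : (countIn a L : ℝ) + 1 ≤ d := by exact_mod_cast hin
    have hout' : (countIn o L : ℝ) ≤ Nout := by exact_mod_cast hout
    push_cast
    linarith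
  have hspec : Real.sqrt Nout * specNorm Xout ≤ Nout := by
    calc Real.sqrt Nout * specNorm Xout ≤ Real.sqrt Nout * Real.sqrt Nout := by
          gcongr
          exact hXout ▸ specNorm_normalized_columns_le o
      _ = Nout := Real.mul_self_sqrt Nout.cast_nonneg
  linarith
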